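/- Suppose σ_1, …, σ_r satisfy property I with witnesses α_1, …, α_r ⊆ {1,…,N}. Then χ_c(S)(t) = t^{n−N} · Σ_{F ∈ T(S)} (t − 1)^{N−|F|} in ℤ[t,t⁻¹]; that is, after multiplying by t^{N−n}, the simplicial chromatic polynomial is the f-vector generating function Σ_{j≥0} f_{j−1}(T(S)) (t−1)^{N−j} of the auxiliary complex T(S), where f_{j−1}(T(S)) is the number of faces of T(S) of cardinality j. -/

import Mathlib

/-!
Inclusion–exclusion over the minimal nonfaces `α i` turns `∑_{F ∈ T(S)} (t - 1)^(N - |F|)` into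
`∑_I (-1)^|I| t^(N - |α_I|)`, so it suffices that `|σ_I| - |α_I| = c(I)` for every `I`.
The sets `σ_I` and, by property I, also `α_I` split disjointly along the components of `G_I`;
a component can be built up one index at a time, each new index meeting the earlier ones, and
property I keeps `|σ| - |α| = 1` along the way.
-/

open Finset LaurentPolynomial

noncomputable section

/-- The union `σ_I = ⋃_{i ∈ I} σ_i`. -/
def unionOver {ι V : Type*} [DecidableEq V] (σ : ι → Finset V) (I : Finset ι) : Finset V :=
  I.sup σ

/-- The intersection graph `G_I` on the vertex set `I`. -/
def interGraph {ι V : Type*} [DecidableEq V] (σ : ι → Finset V) (I : Finset ι) :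
    SimpleGraph {i // i ∈ I} where
  Adj i j := i ≠ j ∧ (σ i.1 ∩ σ j.1).Nonempty
  symm := by
    constructor
    intro i j h
    exact ⟨h.1.symm, by rw [Finset.inter_comm]; exact h.2⟩
  loopless := by constructor; intro i h; exact h.1 rfl

/-- `c(I)`, the number of connected components of `G_I`. -/
def compCount {ι V : Type*} [DecidableEq V] (σ : ι → Finset V) (I : Finset ι) : ℕ :=
  Nat.card (interGraph σ I).ConnectedComponent

/-- Property I. -/
def PropertyI {ι V W : Type*} [DecidableEq V] [DecidableEq W]
    (σ : ι → Finset V) (α : ι → Finset W) : Prop :=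
  (∀ i, (α i).card + 1 = (σ i).card) ∧
  ∀ I : Finset ι, I.Nonempty → ∀ p ∉ I,
    (unionOver σ I ∩ σ p = ∅ → unionOver α I ∩ α p = ∅) ∧
    ((unionOver σ I ∩ σ p).Nonempty →
      (unionOver α I ∩ α p).card + 1 = (unionOver σ I ∩ σ p).card)

/-- The simplicial chromatic polynomial. -/
def simpChrom {ι : Type*} [Fintype ι] [DecidableEq ι] {n : ℕ} (σ : ι → Finset (Fin n)) :
    LaurentPolynomial ℤ :=
  T (n : ℤ) +
  ∑ I ∈ (univ : Finset ι).powerset.filter (fun I => I.Nonempty),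
    (-1) ^ I.card *
      T ((n : ℤ) - ((unionOver σ I).card : ℤ) + (compCount σ I : ℤ))

/-- Faces of the complex whose minimal nonfaces are the `α i`. -/
def facesOf {ι : Type*} [Fintype ι] {N : ℕ} (α : ι → Finset (Fin N)) :
    Finset (Finset (Fin N)) :=
  (univ : Finset (Finset (Fin N))).filter (fun F => ∀ i, ¬ α i ⊆ F)

/-- Coefficient of `t^k` in a Laurent polynomial. -/
def lcoeff (p : LaurentPolynomial ℤ) (k : ℤ) : ℤ := p.coeff k

end
section PropertyI

section

variable {ι V W : Type*} [DecidableEq V] [DecidableEq W] {σ : ι → Finset V} {α : ι → Finset W}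

lemma unionOver_insert [DecidableEq ι] (τ : ι → Finset V) (p : ι) (J : Finset ι) :
    unionOver τ (insert p J) = τ p ∪ unionOver τ J :=
  sup_insert

lemma subset_unionOver (τ : ι → Finset V) {J : Finset ι} {i : ι} (hi : i ∈ J) :
    τ i ⊆ unionOver τ J :=
  le_sup (f := τ) hi

def IsOverlapConnected [DecidableEq ι] (σ : ι → Finset V) (K : Finset ι) : Prop :=
  ∀ J ⊂ K, J.Nonempty → ∃ p ∈ K \ J, (unionOver σ J ∩ σ p).Nonempty

namespace PropertyI

variable (h : PropertyI σ α)
include h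

lemma card_unionOver_insert [DecidableEq ι] {J : Finset ι} (hJ : J.Nonempty) {p : ι}
    (hp : p ∉ J) (hmeet : (unionOver σ J ∩ σ p).Nonempty)
    (hcard : #(unionOver α J) + 1 = #(unionOver σ J)) :
    #(unionOver α (insert p J)) + 1 = #(unionOver σ (insert p J)) := by
  have hinter := (h.2 J hJ p hp).2 hmeet
  have hα := card_union_add_card_inter (unionOver α J) (α p)
  have hσ := card_union_add_card_inter (unionOver σ J) (σ p)
  have hsize := h.1 p
  rw [unionOver_insert, unionOver_insert, union_comm (α p), union_comm (σ p)]
  omega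

lemma card_unionOver_add_one [DecidableEq ι] {K : Finset ι} (hK : IsOverlapConnected σ K)
    (hne : K.Nonempty) : #(unionOver α K) + 1 = #(unionOver σ K) := by
  obtain ⟨i, hi⟩ := hne
  suffices grow : ∀ J, #J ≤ #K → J ⊆ K → J.Nonempty →
      #(unionOver α J) + 1 = #(unionOver σ J) → #(unionOver α K) + 1 = #(unionOver σ K) by
    refine grow {i} (by simpa using ⟨i, hi⟩) (by simpa using hi) (singleton_nonempty i) ?_
    simpa [unionOver] using h.1 i
  refine strongDownwardInduction fun J ih _ hJK hJ hcard => ?_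
  rcases hJK.eq_or_ssubset with rfl | hJK
  · exact hcard
  obtain ⟨p, hp, hmeet⟩ := hK J hJK hJ
  rw [mem_sdiff] at hp
  have hpJK : insert p J ⊆ K := insert_subset hp.1 hJK.subset
  exact ih (card_le_card hpJK) (ssubset_insert hp.2) hpJK (insert_nonempty p J)
    (h.card_unionOver_insert hJ hp.2 hmeet hcard)

lemma disjoint_unionOver {J K : Finset ι} (hJ : J.Nonempty) (hJK : Disjoint J K)
    (hσ : Disjoint (unionOver σ J) (unionOver σ K)) :
    Disjoint (unionOver α J) (unionOver α K) := by
  refine Finset.disjoint_sup_right.2 fun p hp => disjoint_iff_inter_eq_empty.2 ?_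
  refine (h.2 J hJ p (disjoint_right.1 hJK hp)).1 ?_
  exact disjoint_iff_inter_eq_empty.1 (hσ.mono_right (subset_unionOver σ hp))

end PropertyI

end

section Components

open SimpleGraph

variable {ι V : Type*} [DecidableEq V] (σ : ι → Finset V) (I : Finset ι)

open Classical in
noncomputable def componentBlock (c : (interGraph σ I).ConnectedComponent) : Finset ι :=
  (univ.filter fun v => (interGraph σ I).connectedComponentMk v = c).map
    (Function.Embedding.subtype _)

variable {σ I}

lemma mem_componentBlock {c : (interGraph σ I).ConnectedComponent} {i : ι} :
    i ∈ componentBlock σ I c ↔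
      ∃ hi : i ∈ I, (interGraph σ I).connectedComponentMk ⟨i, hi⟩ = c := by
  simp [componentBlock]

lemma connectedComponentMk_eq_of_not_disjoint {i j : {i // i ∈ I}}
    (hij : ¬ Disjoint (σ i) (σ j)) :
    (interGraph σ I).connectedComponentMk i = (interGraph σ I).connectedComponentMk j := by
  rcases eq_or_ne i j with rfl | hne
  · rfl
  · exact ConnectedComponent.sound (Adj.reachable ⟨hne, not_disjoint_iff_nonempty_inter.1 hij⟩)

lemma componentBlock_nonempty (c : (interGraph σ I).ConnectedComponent) :
    (componentBlock σ I c).Nonempty := by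
  obtain ⟨v, rfl⟩ := c.exists_rep
  exact ⟨v.1, mem_componentBlock.2 ⟨v.2, rfl⟩⟩

lemma biUnion_componentBlock [DecidableEq ι] : univ.biUnion (componentBlock σ I) = I := by
  ext i
  simp only [mem_biUnion, mem_univ, true_and, mem_componentBlock]
  exact ⟨fun ⟨_, hi, _⟩ => hi, fun hi => ⟨_, hi, rfl⟩⟩

lemma disjoint_componentBlock {c d : (interGraph σ I).ConnectedComponent} (hcd : c ≠ d) :
    Disjoint (componentBlock σ I c) (componentBlock σ I d) := by
  refine disjoint_left.2 fun i hc hd => hcd ?_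
  obtain ⟨_, rfl⟩ := mem_componentBlock.1 hc
  obtain ⟨_, rfl⟩ := mem_componentBlock.1 hd
  rfl

lemma disjoint_unionOver_componentBlock {c d : (interGraph σ I).ConnectedComponent}
    (hcd : c ≠ d) :
    Disjoint (unionOver σ (componentBlock σ I c)) (unionOver σ (componentBlock σ I d)) := by
  refine Finset.disjoint_sup_left.2 fun i hi => Finset.disjoint_sup_right.2 fun j hj => ?_
  obtain ⟨hiI, rfl⟩ := mem_componentBlock.1 hi
  obtain ⟨hjI, rfl⟩ := mem_componentBlock.1 hj
  by_contra hij
  exact hcd (connectedComponentMk_eq_of_not_disjoint (i := ⟨i, hiI⟩) (j := ⟨j, hjI⟩) hij)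

lemma isOverlapConnected_componentBlock [DecidableEq ι]
    (c : (interGraph σ I).ConnectedComponent) :
    IsOverlapConnected σ (componentBlock σ I c) := by
  intro J hJ ⟨j, hj⟩
  obtain ⟨q, hq, hqJ⟩ := exists_of_ssubset hJ
  obtain ⟨_, hjc⟩ := mem_componentBlock.1 (hJ.subset hj)
  obtain ⟨_, hqc⟩ := mem_componentBlock.1 hq
  obtain ⟨w⟩ := ConnectedComponent.exact (hjc.trans hqc.symm)
  obtain ⟨d, -, hdJ, hdJ'⟩ := w.exists_boundary_dart {v | v.1 ∈ J} hj hqJ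
  obtain ⟨_, hdc⟩ := mem_componentBlock.1 (hJ.subset hdJ)
  refine ⟨d.snd.1, mem_sdiff.2 ⟨mem_componentBlock.2 ⟨d.snd.2, ?_⟩, hdJ'⟩, ?_⟩
  · exact (ConnectedComponent.sound d.adj.reachable).symm.trans hdc
  · exact d.adj.2.mono (inter_subset_inter_right (subset_unionOver σ hdJ))

lemma unionOver_eq_biUnion_componentBlock [DecidableEq ι] {X : Type*} [DecidableEq X]
    (σ : ι → Finset V) (τ : ι → Finset X) (I : Finset ι) :
    unionOver τ I = univ.biUnion fun c => unionOver τ (componentBlock σ I c) := by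
  conv_lhs => rw [← biUnion_componentBlock (σ := σ) (I := I)]
  rw [unionOver, sup_biUnion, sup_eq_biUnion]
  rfl

end Components

lemma PropertyI.card_unionOver_add_compCount {ι V W : Type*} [DecidableEq ι] [DecidableEq V]
    [DecidableEq W] {σ : ι → Finset V} {α : ι → Finset W} (h : PropertyI σ α) (I : Finset ι) :
    #(unionOver α I) + compCount σ I = #(unionOver σ I) := by
  have hσ := card_biUnion (s := univ) fun (c : (interGraph σ I).ConnectedComponent) _ d _ hcd =>
    disjoint_unionOver_componentBlock hcd
  have hα := card_biUnion (s := univ) fun (c : (interGraph σ I).ConnectedComponent) _ d _ hcd =>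
    h.disjoint_unionOver (componentBlock_nonempty c) (disjoint_componentBlock hcd)
      (disjoint_unionOver_componentBlock hcd)
  rw [unionOver_eq_biUnion_componentBlock σ α, unionOver_eq_biUnion_componentBlock σ σ, hσ, hα,
    compCount, Nat.card_eq_fintype_card, ← card_univ, card_eq_sum_ones, ← sum_add_distrib]
  exact sum_congr rfl fun c _ =>
    h.card_unionOver_add_one (isOverlapConnected_componentBlock c) (componentBlock_nonempty c)

lemma compCount_empty {ι V : Type*} [DecidableEq V] (σ : ι → Finset V) :
    compCount σ ∅ = 0 := by
  simp [compCount]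

lemma simpChrom_eq_sum_powerset {ι : Type*} [Fintype ι] [DecidableEq ι] {n : ℕ}
    (σ : ι → Finset (Fin n)) :
    simpChrom σ = ∑ I ∈ (univ : Finset ι).powerset,
      (-1) ^ #I * T ((n : ℤ) - #(unionOver σ I) + compCount σ I) := by
  rw [simpChrom, ← add_sum_erase _ _ (empty_mem_powerset _)]
  congr 1
  · simp [unionOver, compCount_empty]
  · congr 1
    ext I
    simp [nonempty_iff_ne_empty, and_comm]

lemma sum_pow_card_sub_card_of_subset {β R : Type*} [Fintype β] [DecidableEq β] [CommRing R]
    (A : Finset β) (x : R) :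
    ∑ F ∈ univ.filter (A ⊆ ·), x ^ (Fintype.card β - #F) = (x + 1) ^ (Fintype.card β - #A) := by
  simp only [← card_compl]
  rw [← sum_pow_mul_eq_add_pow x 1 Aᶜ]
  refine sum_nbij' compl compl (fun F hF => ?_) (fun G hG => ?_) (fun F _ => compl_compl F)
    (fun G _ => compl_compl G) (fun F _ => by simp)
  · simpa using (mem_filter.1 hF).2
  · simpa [subset_compl_comm] using hG

lemma sum_facesOf {ι R : Type*} [Fintype ι] [DecidableEq ι] [CommRing R] {N : ℕ}
    (α : ι → Finset (Fin N)) (x : R) :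
    ∑ F ∈ facesOf α, x ^ (N - #F) =
      ∑ I ∈ (univ : Finset ι).powerset, (-1) ^ #I * (x + 1) ^ (N - #(unionOver α I)) := by
  have hfaces : facesOf α = univ.inf fun i => (univ.filter (α i ⊆ ·))ᶜ := by
    ext F
    simp [facesOf, mem_inf]
  have hsupersets (I : Finset ι) :
      I.inf (fun i => univ.filter (α i ⊆ ·)) = univ.filter (unionOver α I ⊆ ·) := by
    ext F
    simp [unionOver, mem_inf]
  rw [hfaces, inclusion_exclusion_sum_inf_compl]
  refine sum_congr rfl fun I _ => ?_
  have hsum := sum_pow_card_sub_card_of_subset (unionOver α I) x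
  rw [Fintype.card_fin] at hsum
  rw [hsupersets, hsum, zsmul_eq_mul]
  push_cast
  rfl

/-- under property I,
`χ_c(S)(t) = t^{n−N} · Σ_{F ∈ T(S)} (t − 1)^{N−|F|}`. -/
theorem stmt_4 {n r N : ℕ}
    (σ : Fin r → Finset (Fin n)) (α : Fin r → Finset (Fin N))
    (h : PropertyI σ α) :
    simpChrom σ =
      T ((n : ℤ) - N) *
        ∑ F ∈ facesOf α, (T 1 - 1) ^ (N - F.card) := by
  rw [simpChrom_eq_sum_powerset, sum_facesOf, sub_add_cancel, mul_sum]
  refine sum_congr rfl fun I _ => ?_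
  rw [mul_left_comm, T_pow, mul_one, ← T_add]
  have hα : #(unionOver α I) ≤ N := by simpa using card_le_univ (unionOver α I)
  have hkey := h.card_unionOver_add_compCount I
  congr 2
  omega
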